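/- A ring R is strongly virtually regular as a module over itself if and only if R is both a pp-ring (every principal ideal of R is projective) and a Bézout ring (every finitely generated ideal of R is principal). -/

import Mathlib

/-- A submodule is a direct summand if it has a complement. -/
def Submodule.IsDirectSummand {R M : Type*} [Ring R] [AddCommGroup M] [Module R M]
    (N : Submodule R M) : Prop :=
  ∃ N' : Submodule R M, IsCompl N N'

/-- A module is strongly virtually regular if every finitely generated submodule is
isomorphic to a direct summand. -/
def StronglyVirtuallyRegular (R M : Type*) [Ring R] [AddCommGroup M] [Module R M] : Prop :=
  ∀ A : Submodule R M, A.FG → ∃ N : Submodule R M, N.IsDirectSummand ∧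
    Nonempty (A ≃ₗ[R] N)

/-!
A direct summand `N` of `R` is projective and, via the projection onto `N`, a quotient of `R`;
so an ideal isomorphic to `N` is projective and, being the image of `R`, principal. Conversely,
a projective principal ideal `Ra` is a quotient `R → Ra` which splits, so it is isomorphic to
the image of the splitting, a direct summand of `R`.
-/

open Function LinearMap

section

variable {R M P : Type*} [Ring R] [AddCommGroup M] [Module R M] [AddCommGroup P] [Module R P]

theorem LinearMap.isCompl_range_ker_of_leftInverse (s : P →ₗ[R] M) (f : M →ₗ[R] P)
    (h : LeftInverse f s) : IsCompl (range s) (ker f) := by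
  have hidem : IsIdempotentElem (s ∘ₗ f) := by ext x; simp [h (f x)]
  have hrange : range (s ∘ₗ f) = range s :=
    range_comp_of_range_eq_top s (range_eq_top_of_surjective f h.surjective)
  have hker : ker (s ∘ₗ f) = ker f :=
    ker_comp_of_ker_eq_bot f (ker_eq_bot_of_injective h.injective)
  exact hrange ▸ hker ▸ hidem.isCompl

theorem exists_isDirectSummand_linearEquiv_of_surjective [Module.Projective R P]
    (f : M →ₗ[R] P) (hf : Surjective f) :
    ∃ N : Submodule R M, N.IsDirectSummand ∧ Nonempty (P ≃ₗ[R] N) := by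
  obtain ⟨s, hs⟩ := Module.projective_lifting_property f LinearMap.id hf
  have h : LeftInverse f s := LinearMap.congr_fun hs
  exact ⟨range s, ⟨ker f, isCompl_range_ker_of_leftInverse s f h⟩,
    ⟨LinearEquiv.ofLeftInverse h⟩⟩

theorem Submodule.IsDirectSummand.projective [Module.Projective R M] {N : Submodule R M}
    (hN : N.IsDirectSummand) : Module.Projective R N := by
  obtain ⟨N', hc⟩ := hN
  exact .of_split N.subtype (N.projectionOnto N' hc) (by ext x; simp)

theorem Submodule.isPrincipal_of_surjective {M' : Type*} [AddCommGroup M'] [Module R M']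
    [(⊤ : Submodule R M').IsPrincipal] {A : Submodule R M} (f : M' →ₗ[R] A)
    (hf : Surjective f) : A.IsPrincipal := by
  have hA : map (A.subtype ∘ₗ f) ⊤ = A := by
    rw [← range_eq_map, range_comp_of_range_eq_top _ (range_eq_top_of_surjective f hf),
      range_subtype]
  exact hA ▸ IsPrincipal.map _ inferInstance

theorem Submodule.IsDirectSummand.isPrincipal_of_linearEquiv {N : Submodule R R}
    (hN : N.IsDirectSummand) {A : Submodule R M} (e : A ≃ₗ[R] N) : A.IsPrincipal := by
  obtain ⟨N', hc⟩ := hN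
  exact isPrincipal_of_surjective (e.symm.toLinearMap ∘ₗ N.projectionOnto N' hc)
    (e.symm.surjective.comp (projectionOnto_surjective hc))

end

/-- `R` is strongly virtually regular as a module over itself iff `R` is a pp-ring
(every principal ideal is projective) and a Bézout ring (every finitely generated
ideal is principal). -/
theorem stronglyVirtuallyRegular_self_iff_pp_and_bezout {R : Type*} [Ring R] :
    StronglyVirtuallyRegular R R ↔
      (∀ a : R, Module.Projective R (Ideal.span {a})) ∧
        (∀ I : Ideal R, I.FG → I.IsPrincipal) := by
  constructor
  · intro h
    refine ⟨fun a => ?_, fun I hI => ?_⟩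
    · obtain ⟨N, hN, ⟨e⟩⟩ := h (Ideal.span {a}) (Submodule.fg_span_singleton a)
      have := hN.projective
      exact .of_equiv e.symm
    · obtain ⟨N, hN, ⟨e⟩⟩ := h I hI
      exact hN.isPrincipal_of_linearEquiv e
  · rintro ⟨hpp, hbez⟩ A hA
    obtain ⟨a, rfl⟩ := (hbez A hA).principal
    have hproj : Module.Projective R (Submodule.span R {a}) := hpp a
    rw [span_singleton_eq_range] at hproj ⊢
    exact exists_isDirectSummand_linearEquiv_of_surjective _
      (toSpanSingleton R R a).surjective_rangeRestrict
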